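/- For n ≥ 0, the inclusion □^n ⊆ N(RCpt^n) is inner anodyne, where RCpt^n is the poset {(i,j) : 0 ≤ i ≤ j ≤ n} with the order induced from [n] × [n], and □^n = ⋃_{k=0}^n N({(i,j) : 0 ≤ i ≤ k ≤ j ≤ n}) is the union of the nerves of the indicated full subposets inside N(RCpt^n). -/

import Mathlib

/-
A nondegenerate simplex of `N(RCpt^n)` is a nonempty chain `c`, and it lies in `□^n` iff every
vertex starts no later than the smallest endpoint `m = min_{v ∈ c} v.2`. Otherwise let `r` be the
smallest endpoint among the vertices starting after `m`: the pivot `p = (m, r)` is comparable with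
every vertex of `c`, lies strictly between two of them, and inserting or deleting `p` leaves the
pivot unchanged. Pairing each chain outside `□^n` that misses its pivot with the chain obtained by
inserting it is therefore a Moss pairing whose horns are all inner. If the small chain of one pair
is a codimension-one face of the large chain of another pair, the vertex left out ends before the
new pivot, so the large chain of the first pair has a strictly smaller `∑_{v} (n - v.2)` than
that of the second: the pairing is regular, and the inclusion is a strong inner anodyne extension.
-/

open CategoryTheory Simplicial

/-- The union of the nerves of a family of full subposets, as a subcomplex of the
nerve of a poset `S`. -/
def nerveUnion (S : Type*) [PartialOrder S] (Qs : Set (Set S)) :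
    Subfunctor (nerve S) where
  obj _ := {σ | ∃ T ∈ Qs, ∀ i, σ.obj i ∈ T}
  map f := by
    rintro σ ⟨T, hT, h⟩
    exact ⟨T, hT, fun i => h _⟩

/-- The class of inner horn inclusions `Λ[n, i] ⟶ Δ[n]`, `0 < i < n`, up to
isomorphism in the arrow category. -/
def InnerHornInclusions : MorphismProperty SSet := fun _ _ f =>
  ∃ (n : ℕ) (i : Fin (n + 1)), 0 < (i : ℕ) ∧ (i : ℕ) < n ∧
    Nonempty (Arrow.mk f ≅ Arrow.mk ((SSet.horn n i).ι))

/-- The right lifting property against a class of morphisms. -/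
def RLP (T : MorphismProperty SSet) : MorphismProperty SSet := fun _ _ p =>
  ∀ ⦃A B : SSet⦄ (i : A ⟶ B), T i → HasLiftingProperty i p

/-- The left lifting property against a class of morphisms. -/
def LLP (T : MorphismProperty SSet) : MorphismProperty SSet := fun _ _ i =>
  ∀ ⦃X Y : SSet⦄ (p : X ⟶ Y), T p → HasLiftingProperty i p

/-- Inner anodyne maps. -/
def InnerAnodyne : MorphismProperty SSet := LLP (RLP InnerHornInclusions)

/-- `RCpt^n` is the poset `{(i,j) : 0 ≤ i ≤ j ≤ n}` with the order induced from
`[n] × [n]`. -/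
def RCpt (n : ℕ) : Type := {ij : Fin (n + 1) × Fin (n + 1) // ij.1 ≤ ij.2}

instance (n : ℕ) : PartialOrder (RCpt n) :=
  inferInstanceAs (PartialOrder {ij : Fin (n + 1) × Fin (n + 1) // ij.1 ≤ ij.2})

open SSet

lemma innerHornInclusions_le_InnerHornInclusions : innerHornInclusions ≤ InnerHornInclusions := by
  rintro _ _ _ ⟨i, h0, hn⟩
  exact ⟨_, i, h0, hn, ⟨Iso.refl _⟩⟩

lemma InnerAnodyne.of_innerAnodyneExtensions {A B : SSet} {f : A ⟶ B}
    (hf : innerAnodyneExtensions f) : InnerAnodyne f :=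
  fun _ _ p hp => hf p fun _ _ i hi => hp i (innerHornInclusions_le_InnerHornInclusions _ hi)

lemma Fin.exists_castSucc_lt_and_lt_succ {α : Type*} [PartialOrder α] {d : ℕ}
    {x : Fin (d + 1) → α} (hx : Monotone x) {w : α} (hw : w ∉ Set.range x)
    (hcomp : ∀ i, x i ≤ w ∨ w ≤ x i) {a b : Fin (d + 1)} (ha : x a < w) (hb : w < x b) :
    ∃ i : Fin d, x i.castSucc < w ∧ w < x i.succ := by
  classical
  have hex : ∃ j, w < x j := ⟨b, hb⟩
  have hj0 : Fin.find _ hex ≠ 0 := fun h0 =>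
    (Fin.find_spec hex).not_ge (h0 ▸ (hx (Fin.zero_le a)).trans ha.le)
  obtain ⟨i, hi⟩ := Fin.eq_succ_of_ne_zero hj0
  have hnot : ¬ w < x i.castSucc := Fin.find_min hex (hi ▸ i.castSucc_lt_succ)
  refine ⟨i, lt_of_le_of_ne ((hcomp _).resolve_right fun h => hnot (lt_of_le_of_ne h ?_))
    fun h => hw ⟨_, h⟩, hi ▸ Fin.find_spec hex⟩
  exact fun h => hw ⟨_, h.symm⟩

lemma Finset.lt_inf_of_inf_insert_ne {α β : Type*} [DecidableEq α] [LinearOrder β] [OrderTop β]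
    {s : Finset α} {a : α} {f : α → β} (h : (insert a s).inf f ≠ s.inf f) : f a < s.inf f := by
  rw [Finset.inf_insert, Ne, inf_eq_right, not_le] at h
  exact h

namespace SSet.S

variable {P : Type*} [PartialOrder P] [DecidableEq P]

def nerveVertices (s : (nerve P).S) : Finset P := Finset.univ.image s.simplex.obj

lemma nerveVertices_mk {m : ℕ} (x : (nerve P) _⦋m⦌) :
    (S.mk x).nerveVertices = Finset.univ.image x.obj := rfl

lemma isChain_nerveVertices (s : (nerve P).S) :
    IsChain (· ≤ ·) (s.nerveVertices : Set P) := by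
  simp only [nerveVertices, Finset.coe_image, Finset.coe_univ, Set.image_univ]
  rintro _ ⟨i, rfl⟩ _ ⟨j, rfl⟩ -
  exact (le_total i j).imp (fun h => s.simplex.monotone h) (fun h => s.simplex.monotone h)

lemma nerveVertices_mono {s t : (nerve P).S} (h : s ≤ t) :
    s.nerveVertices ⊆ t.nerveVertices := by
  obtain ⟨f, hf⟩ := S.le_iff.1 h
  intro _ hv
  simp only [nerveVertices, Finset.mem_image, Finset.mem_univ, true_and] at hv ⊢
  obtain ⟨i, rfl⟩ := hv
  exact ⟨f.toOrderHom i, by rw [← hf]; rfl⟩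

lemma nerveVertices_δ {m : ℕ} (y : (nerve P) _⦋m + 1⦌) (hy : StrictMono y.obj)
    (k : Fin (m + 2)) :
    (S.mk ((nerve P).δ k y)).nerveVertices = (S.mk y).nerveVertices.erase (y.obj k) := by
  ext v
  simp only [nerveVertices_mk, Finset.mem_image, Finset.mem_univ, true_and, Finset.mem_erase]
  constructor
  · rintro ⟨j, rfl⟩
    exact ⟨fun h => k.succAbove_ne j (hy.injective h), _, rfl⟩
  · rintro ⟨hv, j, rfl⟩
    obtain ⟨j, rfl⟩ := Fin.exists_succAbove_eq (fun h => hv (h ▸ rfl) : j ≠ k)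
    exact ⟨j, rfl⟩

end SSet.S

namespace SSet.N

variable {P : Type*} [PartialOrder P]

lemma strictMono_obj (s : (nerve P).N) : StrictMono s.simplex.obj :=
  (PartialOrder.mem_nerve_nonDegenerate_iff_strictMono _).1 s.nonDegenerate

variable [DecidableEq P]

lemma card_nerveVertices (s : (nerve P).N) : s.nerveVertices.card = s.dim + 1 := by
  rw [S.nerveVertices, Finset.card_image_of_injective _ s.strictMono_obj.injective,
    Finset.card_univ, Fintype.card_fin]

lemma eq_of_nerveVertices_eq {s t : (nerve P).N}
    (h : s.nerveVertices = t.nerveVertices) : s = t := by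
  obtain ⟨m, ⟨x, hx⟩, rfl⟩ := s.mk_surjective
  obtain ⟨m', ⟨y, hy⟩, rfl⟩ := t.mk_surjective
  obtain rfl : m = m' := by
    simpa using (card_nerveVertices (N.mk x hx)).symm.trans
      ((congrArg Finset.card h).trans (card_nerveVertices (N.mk y hy)))
  have hrange := congrArg (fun c : Finset P => (c : Set P)) h
  simp only [S.nerveVertices, Finset.coe_image, Finset.coe_univ, Set.image_univ] at hrange
  have hobj := ((strictMono_obj (N.mk x hx)).range_inj (strictMono_obj (N.mk y hy))).1 hrange
  rw [N.ext_iff]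
  exact congrArg S.mk
    (CategoryTheory.Functor.ext (congrFun hobj) (fun _ _ _ => Subsingleton.elim _ _))

end SSet.N

namespace RCpt

variable {n : ℕ}

instance : DecidableEq (RCpt n) :=
  inferInstanceAs (DecidableEq {ij : Fin (n + 1) × Fin (n + 1) // ij.1 ≤ ij.2})

lemma fst_le_snd (a : RCpt n) : a.1.1 ≤ a.1.2 := a.2

def IsCubical (c : Finset (RCpt n)) : Prop := ∃ k, ∀ v ∈ c, v.1.1 ≤ k ∧ k ≤ v.1.2

lemma IsCubical.mono {c d : Finset (RCpt n)} (h : c ⊆ d) : IsCubical d → IsCubical c :=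
  fun ⟨k, hk⟩ => ⟨k, fun v hv => hk v (h hv)⟩

def minSnd (c : Finset (RCpt n)) : Fin (n + 1) := c.inf fun v => v.1.2

def late (c : Finset (RCpt n)) : Finset (RCpt n) := c.filter fun v => minSnd c < v.1.1

lemma minSnd_insert (p : RCpt n) (c : Finset (RCpt n)) :
    minSnd (insert p c) = p.1.2 ⊓ minSnd c :=
  Finset.inf_insert

variable {c : Finset (RCpt n)}

lemma minSnd_le {v : RCpt n} (hv : v ∈ c) : minSnd c ≤ v.1.2 := Finset.inf_le hv

lemma exists_snd_eq_minSnd (hc : c.Nonempty) : ∃ v ∈ c, v.1.2 = minSnd c := by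
  obtain ⟨v, hv, h⟩ := Finset.exists_mem_eq_inf c hc fun v => v.1.2
  exact ⟨v, hv, h.symm⟩

lemma mem_late {v : RCpt n} : v ∈ late c ↔ v ∈ c ∧ minSnd c < v.1.1 := Finset.mem_filter

lemma late_subset : late c ⊆ c := Finset.filter_subset _ _

lemma not_isCubical_iff : ¬ IsCubical c ↔ (late c).Nonempty := by
  refine ⟨fun h => ?_, fun ⟨v, hv⟩ ⟨k, hk⟩ => ?_⟩
  · by_contra hl
    exact h ⟨minSnd c, fun v hv => ⟨not_lt.1 fun hlt => hl ⟨v, mem_late.2 ⟨hv, hlt⟩⟩,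
      minSnd_le hv⟩⟩
  · have hkc : k ≤ minSnd c := Finset.le_inf fun u hu => (hk u hu).2
    exact (mem_late.1 hv).2.not_ge ((hk v (mem_late.1 hv).1).1.trans hkc)

lemma minSnd_le_minSnd_late : minSnd c ≤ minSnd (late c) :=
  Finset.le_inf fun v hv => (mem_late.1 hv).2.le.trans (fst_le_snd v)

lemma minSnd_lt_minSnd_late (h : (late c).Nonempty) : minSnd c < minSnd (late c) := by
  obtain ⟨v, hv, hv2⟩ := exists_snd_eq_minSnd h
  exact hv2 ▸ (mem_late.1 hv).2.trans_le (fst_le_snd v)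

def pivot (c : Finset (RCpt n)) : RCpt n := ⟨(minSnd c, minSnd (late c)), minSnd_le_minSnd_late⟩

lemma pivot_eq_pivot {d : Finset (RCpt n)} (h₁ : minSnd c = minSnd d)
    (h₂ : minSnd (late c) = minSnd (late d)) : pivot c = pivot d :=
  Subtype.ext (Prod.ext h₁ h₂)

lemma pivot_notMem_late : pivot c ∉ late c := fun h => (lt_irrefl _) (mem_late.1 h).2

lemma pivot_lt {v : RCpt n} (hv : v ∈ late c) : pivot c < v :=
  lt_of_le_of_ne ⟨(mem_late.1 hv).2.le, Finset.inf_le hv⟩ fun h => pivot_notMem_late (h ▸ hv)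

lemma le_pivot (hc : IsChain (· ≤ ·) (c : Set (RCpt n))) {u : RCpt n} (hu : u ∈ c)
    (hu₁ : u.1.1 ≤ minSnd c) : u ≤ pivot c := by
  refine ⟨hu₁, Finset.le_inf fun v hv => ?_⟩
  obtain ⟨hvc, hv₁⟩ := mem_late.1 hv
  rcases hc.total hu hvc with h | h
  · exact h.2
  · exact absurd (h.1.trans hu₁) (not_le.2 hv₁)

lemma le_pivot_or_pivot_le (hc : IsChain (· ≤ ·) (c : Set (RCpt n))) {u : RCpt n} (hu : u ∈ c) :
    u ≤ pivot c ∨ pivot c ≤ u := by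
  rcases le_or_gt u.1.1 (minSnd c) with h | h
  · exact .inl (le_pivot hc hu h)
  · exact .inr (pivot_lt (mem_late.2 ⟨hu, h⟩)).le

lemma exists_lt_pivot (hc : IsChain (· ≤ ·) (c : Set (RCpt n))) (h : (late c).Nonempty) :
    ∃ u ∈ c, u < pivot c := by
  obtain ⟨u, hu, hu₂⟩ := exists_snd_eq_minSnd (h.mono late_subset)
  refine ⟨u, hu, lt_of_le_of_ne (le_pivot hc hu (hu₂ ▸ fst_le_snd u)) fun he => ?_⟩
  exact (minSnd_lt_minSnd_late h).ne (hu₂.symm.trans (congrArg (fun v : RCpt n => v.1.2) he))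

lemma minSnd_insert_eq_and_late_insert_eq {p : RCpt n} (h₁ : p.1.1 ≤ minSnd c)
    (h₂ : minSnd c ≤ p.1.2) : minSnd (insert p c) = minSnd c ∧ late (insert p c) = late c := by
  have hmin : minSnd (insert p c) = minSnd c := by
    rw [minSnd_insert, inf_eq_right.2 h₂]
  refine ⟨hmin, ?_⟩
  rw [late, hmin, Finset.filter_insert, if_neg (not_lt.2 h₁)]
  rfl

lemma pivot_insert_pivot : pivot (insert (pivot c) c) = pivot c := by
  obtain ⟨h₁, h₂⟩ := minSnd_insert_eq_and_late_insert_eq (c := c) (p := pivot c) le_rfl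
    minSnd_le_minSnd_late
  exact pivot_eq_pivot h₁ (congrArg minSnd h₂)

lemma erase_pivot_insert_pivot (h : pivot c ∉ c) :
    (insert (pivot c) c).erase (pivot (insert (pivot c) c)) = c := by
  rw [pivot_insert_pivot, Finset.erase_insert h]

lemma minSnd_erase_pivot_eq_and_late_erase_pivot_eq (hp : pivot c ∈ c) (h : (late c).Nonempty) :
    minSnd (c.erase (pivot c)) = minSnd c ∧ late (c.erase (pivot c)) = late c := by
  obtain ⟨v, hv, hv₂⟩ := exists_snd_eq_minSnd (h.mono late_subset)
  have hvp : v.1.2 < (pivot c).1.2 := hv₂ ▸ minSnd_lt_minSnd_late h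
  have hv' : v ∈ c.erase (pivot c) := Finset.mem_erase.2 ⟨fun he => hvp.ne (he ▸ rfl), hv⟩
  obtain ⟨h₁, h₂⟩ := minSnd_insert_eq_and_late_insert_eq (c := c.erase (pivot c)) (p := pivot c)
    (Finset.inf_mono (Finset.erase_subset _ _)) ((minSnd_le hv').trans hvp.le)
  rw [Finset.insert_erase hp] at h₁ h₂
  exact ⟨h₁.symm, h₂.symm⟩

lemma pivot_erase_pivot (hp : pivot c ∈ c) (h : (late c).Nonempty) :
    pivot (c.erase (pivot c)) = pivot c :=
  have h' := minSnd_erase_pivot_eq_and_late_erase_pivot_eq hp h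
  pivot_eq_pivot h'.1 (congrArg minSnd h'.2)

lemma snd_lt_snd_pivot {τ : Finset (RCpt n)} {q : RCpt n} (h : pivot τ ≠ pivot (insert q τ)) :
    q.1.2 < (pivot τ).1.2 := by
  by_cases hmin : minSnd (insert q τ) = minSnd τ
  · have hlate : late (insert q τ) = if minSnd τ < q.1.1 then insert q (late τ) else late τ := by
      rw [late, hmin, Finset.filter_insert]; rfl
    split_ifs at hlate
    · exact Finset.lt_inf_of_inf_insert_ne fun he =>
        h (pivot_eq_pivot hmin.symm (by rw [hlate]; exact he.symm))
    · exact absurd (pivot_eq_pivot hmin.symm (congrArg minSnd hlate.symm)) h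
  · exact (Finset.lt_inf_of_inf_insert_ne hmin).trans_le minSnd_le_minSnd_late

def weight (c : Finset (RCpt n)) : ℕ := ∑ v ∈ c, (n - (v.1.2 : ℕ))

lemma weight_insert_pivot_lt {τ : Finset (RCpt n)} {q : RCpt n} (hq : q ∉ τ)
    (hp : pivot τ ∉ τ) (h : pivot τ ≠ pivot (insert q τ)) :
    weight (insert (pivot τ) τ) < weight (insert q τ) := by
  have hlt := snd_lt_snd_pivot h
  have hle := (pivot τ).1.2.is_le
  rw [weight, weight, Finset.sum_insert hp, Finset.sum_insert hq, Fin.lt_def] at *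
  omega

abbrev box (n : ℕ) : (nerve (RCpt n)).Subcomplex :=
  nerveUnion (RCpt n) (Set.range fun k : Fin (n + 1) =>
    Set.ofPred fun x : RCpt n => x.1.1 ≤ k ∧ k ≤ x.1.2)

lemma mem_box_iff {m : ℕ} (x : (nerve (RCpt n)) _⦋m⦌) :
    x ∈ (box n).obj _ ↔ IsCubical (S.mk x).nerveVertices := by
  simp only [S.nerveVertices_mk, IsCubical, Finset.forall_mem_image, Finset.mem_univ,
    true_implies]
  constructor
  · rintro ⟨_, ⟨k, rfl⟩, h⟩
    exact ⟨k, h⟩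
  · rintro ⟨k, h⟩
    exact ⟨_, ⟨k, rfl⟩, h⟩

lemma late_nerveVertices_nonempty (x : (box n).N) : (late x.nerveVertices).Nonempty :=
  not_isCubical_iff.1 fun h => x.notMem ((mem_box_iff _).2 h)

abbrev TypeII (n : ℕ) : Type := {x : (box n).N // pivot x.nerveVertices ∉ x.nerveVertices}

namespace TypeII

variable (x : TypeII n)

lemma exists_castSucc_lt_pivot_lt_succ : ∃ i : Fin x.1.dim,
    x.1.simplex.obj i.castSucc < pivot x.1.nerveVertices ∧
      pivot x.1.nerveVertices < x.1.simplex.obj i.succ := by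
  have hchain := S.isChain_nerveVertices x.1.toS
  have hlate := late_nerveVertices_nonempty x.1
  have hmem (i) : x.1.simplex.obj i ∈ x.1.nerveVertices :=
    Finset.mem_image_of_mem _ (Finset.mem_univ i)
  obtain ⟨_, hu, hlt⟩ := exists_lt_pivot hchain hlate
  obtain ⟨_, hv⟩ := hlate
  obtain ⟨a, -, rfl⟩ := Finset.mem_image.1 hu
  obtain ⟨b, -, rfl⟩ := Finset.mem_image.1 (late_subset hv)
  exact Fin.exists_castSucc_lt_and_lt_succ x.1.simplex.monotone
    (fun ⟨i, hi⟩ => x.2 (hi ▸ hmem i)) (fun i => le_pivot_or_pivot_le hchain (hmem i))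
    hlt (pivot_lt hv)

noncomputable def gap : Fin x.1.dim := x.exists_castSucc_lt_pivot_lt_succ.choose

noncomputable def index : Fin (x.1.dim + 2) := x.gap.castSucc.succ

lemma strictMono_insertNth_pivot :
    StrictMono (Fin.insertNth x.index (pivot x.1.nerveVertices) x.1.simplex.obj) :=
  Fin.strictMono_insertNth x.1.strictMono_obj _ _
    x.exists_castSucc_lt_pivot_lt_succ.choose_spec.1
    x.exists_castSucc_lt_pivot_lt_succ.choose_spec.2

noncomputable def typeI : (nerve (RCpt n)) _⦋x.1.dim + 1⦌ :=
  x.strictMono_insertNth_pivot.monotone.functor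

lemma nonDegenerate_typeI : x.typeI ∈ (nerve (RCpt n)).nonDegenerate _ :=
  (PartialOrder.mem_nerve_nonDegenerate_iff_strictMono _).2 x.strictMono_insertNth_pivot

lemma δ_index_typeI : (nerve (RCpt n)).δ x.index x.typeI = x.1.simplex :=
  CategoryTheory.Functor.ext
    (fun j => (nerve.δ_obj _ _ j).trans (Fin.insertNth_apply_succAbove (α := fun _ => RCpt n)
      x.index (pivot x.1.nerveVertices) x.1.simplex.obj j))
    (fun _ _ _ => Subsingleton.elim _ _)

lemma nerveVertices_typeI :
    (S.mk x.typeI).nerveVertices = insert (pivot x.1.nerveVertices) x.1.nerveVertices := by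
  apply Finset.coe_injective
  simp only [S.nerveVertices, Finset.coe_image, Finset.coe_univ, Set.image_univ,
    Finset.coe_insert]
  exact Fin.range_insertNth _ _ _

lemma typeI_notMem : x.typeI ∉ (box n).obj _ := fun h =>
  x.1.notMem ((mem_box_iff _).2 (IsCubical.mono (Finset.subset_insert _ _)
    (x.nerveVertices_typeI ▸ (mem_box_iff _).1 h)))

variable {x} in
lemma ext_of_nerveVertices {y : TypeII n} (h : x.1.nerveVertices = y.1.nerveVertices) :
    x = y :=
  Subtype.ext ((Subcomplex.N.ext_iff _ _).2 (N.eq_of_nerveVertices_eq h))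

end TypeII

lemma exists_typeII_of_pivot_mem (x : (box n).N) (hp : pivot x.nerveVertices ∈ x.nerveVertices) :
    ∃ s : TypeII n, x.toS = S.mk s.typeI := by
  obtain ⟨m, y, hy, hyA, rfl⟩ := Subcomplex.N.mk_surjective x
  have hlate := late_nerveVertices_nonempty (Subcomplex.N.mk y hy hyA)
  change pivot (S.mk y).nerveVertices ∈ (S.mk y).nerveVertices at hp
  change (late (S.mk y).nerveVertices).Nonempty at hlate
  obtain ⟨m, rfl⟩ : ∃ m', m = m' + 1 := by
    have hcard : (S.mk y).nerveVertices.card = m + 1 := N.card_nerveVertices (N.mk y hy)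
    obtain ⟨v, hv⟩ := hlate
    have : 1 < (S.mk y).nerveVertices.card :=
      Finset.one_lt_card.2 ⟨_, hp, v, late_subset hv, fun h => pivot_notMem_late (h ▸ hv)⟩
    exact Nat.exists_eq_add_one.2 (by omega)
  obtain ⟨k, -, hk⟩ := Finset.mem_image.1 hp
  have hδ : (S.mk ((nerve (RCpt n)).δ k y)).nerveVertices =
      (S.mk y).nerveVertices.erase (pivot (S.mk y).nerveVertices) :=
    hk ▸ S.nerveVertices_δ y (N.strictMono_obj (N.mk y hy)) k
  have hlate' := (minSnd_erase_pivot_eq_and_late_erase_pivot_eq hp hlate).2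
  have hδA : (nerve (RCpt n)).δ k y ∉ (box n).obj _ := fun h =>
    not_isCubical_iff.2 (hlate' ▸ hlate) (hδ ▸ (mem_box_iff _).1 h)
  refine ⟨⟨Subcomplex.N.mk _ (nonDegenerate_δ hy k) hδA, ?_⟩, ?_⟩
  · show pivot (S.mk _).nerveVertices ∉ (S.mk _).nerveVertices
    rw [hδ, pivot_erase_pivot hp hlate]
    exact Finset.notMem_erase _ _
  · refine congrArg N.toS (N.eq_of_nerveVertices_eq (s := N.mk y hy)
      (t := N.mk _ (TypeII.nonDegenerate_typeI _)) ?_)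
    show _ = (S.mk (TypeII.typeI _)).nerveVertices
    rw [TypeII.nerveVertices_typeI]
    show _ = insert (pivot (S.mk _).nerveVertices) (S.mk _).nerveVertices
    rw [hδ, pivot_erase_pivot hp hlate, Finset.insert_erase hp]
    rfl

noncomputable def pairingCore (n : ℕ) : (box n).PairingCore where
  ι := TypeII n
  dim x := x.1.dim
  simplex x := x.typeI
  index x := x.index
  nonDegenerate₁ := TypeII.nonDegenerate_typeI
  nonDegenerate₂ x := x.δ_index_typeI ▸ x.1.nonDegenerate
  notMem₁ := TypeII.typeI_notMem
  notMem₂ x := x.δ_index_typeI ▸ x.1.notMem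
  injective_type₁' {s t} h := by
    have h' := congrArg S.nerveVertices h
    rw [s.nerveVertices_typeI, t.nerveVertices_typeI] at h'
    refine TypeII.ext_of_nerveVertices ?_
    rw [← erase_pivot_insert_pivot s.2, h', erase_pivot_insert_pivot t.2]
  injective_type₂' {s t} h := by
    rw [s.δ_index_typeI, t.δ_index_typeI] at h
    exact Subtype.ext ((Subcomplex.N.eq_iff_sMk_eq _ _).2 h)
  type₁_ne_type₂' s t h := by
    have h' := congrArg S.nerveVertices h
    rw [s.nerveVertices_typeI, t.δ_index_typeI] at h'
    apply t.2
    show _ ∈ (S.mk t.1.simplex).nerveVertices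
    rw [← h', pivot_insert_pivot]
    exact Finset.mem_insert_self _ _
  surjective' x := by
    by_cases hp : pivot x.nerveVertices ∈ x.nerveVertices
    · obtain ⟨s, hs⟩ := exists_typeII_of_pivot_mem x hp
      exact ⟨s, .inl hs⟩
    · exact ⟨⟨x, hp⟩, .inr (by rw [TypeII.δ_index_typeI])⟩

instance : (pairingCore n).IsInner where
  ne_zero x := Fin.succ_ne_zero (TypeII.gap (n := n) x).castSucc
  ne_last x := by
    change (TypeII.gap (n := n) x).castSucc.succ ≠ Fin.last _
    rw [Fin.succ_castSucc]
    exact Fin.castSucc_ne_last _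

lemma weight_insert_pivot_lt_of_le_typeI {s t : TypeII n} (hne : s ≠ t)
    (hle : S.mk ((nerve (RCpt n)).δ s.index s.typeI) ≤ S.mk t.typeI) (hdim : s.1.dim = t.1.dim) :
    weight (insert (pivot s.1.nerveVertices) s.1.nerveVertices) <
      weight (insert (pivot t.1.nerveVertices) t.1.nerveVertices) := by
  have hsub := S.nerveVertices_mono hle
  rw [TypeII.δ_index_typeI, TypeII.nerveVertices_typeI] at hsub
  have hcard : (s.1.nerveVertices).card + 1 =
      (insert (pivot t.1.nerveVertices) t.1.nerveVertices).card := by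
    rw [Finset.card_insert_of_notMem t.2, N.card_nerveVertices, N.card_nerveVertices, hdim]
  obtain ⟨q, hq, hqt⟩ := Finset.exists_eq_insert_iff.2 ⟨hsub, hcard⟩
  have hqp : q ≠ pivot t.1.nerveVertices := by
    rintro rfl
    refine hne (TypeII.ext_of_nerveVertices ?_)
    rw [← Finset.erase_insert hq, hqt, Finset.erase_insert t.2]
  have hpivot : pivot s.1.nerveVertices ≠ pivot (insert q s.1.nerveVertices) := by
    rw [hqt, pivot_insert_pivot]
    intro he
    have hmem := Finset.mem_insert_self (pivot t.1.nerveVertices) t.1.nerveVertices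
    rw [← hqt, ← he] at hmem
    exact s.2 ((Finset.mem_insert.1 hmem).resolve_left (he ▸ hqp.symm))
  rw [← hqt]
  exact weight_insert_pivot_lt hq s.2 hpivot

noncomputable def weakRankFunction : (pairingCore n).WeakRankFunction ℕ where
  rank x := weight (insert (pivot x.1.nerveVertices) x.1.nerveVertices)
  lt h hdim := weight_insert_pivot_lt_of_le_typeI h.1 h.2.le hdim

instance : (pairingCore n).IsRegular := weakRankFunction.isRegular

end RCpt

/-- The inclusion `□^n ⊆ N(RCpt^n)` is inner anodyne, where
`□^n = ⋃_{k=0}^n N({(i,j) : i ≤ k ≤ j})`. -/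
theorem stmt16 (n : ℕ) :
    InnerAnodyne (nerveUnion (RCpt n)
      (Set.range fun k : Fin (n + 1) =>
        setOf fun x : RCpt n => x.1.1 ≤ k ∧ k ≤ x.1.2)).ι :=
  InnerAnodyne.of_innerAnodyneExtensions (RCpt.pairingCore n).pairing.innerAnodyneExtensions
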